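/- arXiv:2307.06224 — 2 statements merged into one kernel-verified Lean document; each statement's English description precedes it below -/
import Mathlib

section
/- Let a, b > 0. If 1/b = 2ℓ/a for some positive integer ℓ, then the set of admissible pairs (m,n) (m even, n ∈ ℕ, or m odd positive, n positive) with m²/a² + n²/b² = 1/b² is exactly {(0,1), (2ℓ, 0)}; otherwise it is exactly {(0,1)}. -/
/-- The set of admissible pairs `(m,n)` (`m` even and `n` arbitrary, or `m` odd positive
and `n` positive) with `m²/a² + n²/b² = 1/b²` is exactly `{(0,1), (2ℓ,0)}` if
`1/b = 2ℓ/a` for a positive integer `ℓ`, and exactly `{(0,1)}` otherwise. -/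
theorem stmt_5 (a b : ℝ) (ha : 0 < a) (hb : 0 < b) :
    (∀ ℓ : ℕ, 0 < ℓ → 1 / b = 2 * (ℓ : ℝ) / a →
      {p : ℕ × ℕ | (Even p.1 ∨ (Odd p.1 ∧ 1 ≤ p.2)) ∧
          (p.1 : ℝ)^2 / a^2 + (p.2 : ℝ)^2 / b^2 = 1 / b^2} = {(0, 1), (2 * ℓ, 0)}) ∧
    ((¬ ∃ ℓ : ℕ, 0 < ℓ ∧ 1 / b = 2 * (ℓ : ℝ) / a) →
      {p : ℕ × ℕ | (Even p.1 ∨ (Odd p.1 ∧ 1 ≤ p.2)) ∧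
          (p.1 : ℝ)^2 / a^2 + (p.2 : ℝ)^2 / b^2 = 1 / b^2} = {(0, 1)}) := by
  have key : ∀ m n : ℕ, ((m:ℝ)^2 / a^2 + (n:ℝ)^2 / b^2 = 1 / b^2) ↔
      ((m = 0 ∧ n = 1) ∨ (n = 0 ∧ (m:ℝ) * b = a)) := by
    intro m n
    constructor
    · intro h
      have h' : (m:ℝ)^2 * b^2 + (n:ℝ)^2 * a^2 = a^2 := by
        field_simp at h; linarith
      have hn : n ≤ 1 := by
        by_contra hn
        push_neg at hn
        have h2 : (2:ℝ) ≤ (n:ℝ) := by exact_mod_cast hn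
        have h4 : (4:ℝ) ≤ (n:ℝ)^2 := by nlinarith
        nlinarith [sq_nonneg ((m:ℝ)*b), mul_pos ha ha]
      interval_cases n
      · right
        refine ⟨rfl, ?_⟩
        have hsq : ((m:ℝ)*b)^2 = a^2 := by push_cast at h'; nlinarith
        have hmb : (0:ℝ) ≤ (m:ℝ)*b := by positivity
        nlinarith
      · left
        refine ⟨?_, rfl⟩
        have hm : (m:ℝ)^2 * b^2 = 0 := by push_cast at h'; nlinarith
        have : (m:ℝ) = 0 := by
          rcases mul_eq_zero.mp hm with h0 | h0
          · exact pow_eq_zero_iff (n := 2) (by norm_num) |>.mp h0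
          · exact absurd h0 (by positivity)
        exact_mod_cast this
    · rintro (⟨hm, hn⟩ | ⟨hn, hmb⟩)
      · subst hm; subst hn; norm_num
      · subst hn
        have : (m:ℝ) = a / b := by field_simp at hmb ⊢; linarith
        rw [this]
        field_simp
        ring
  constructor
  · intro ℓ hℓ hab
    have hab' : a = 2 * (ℓ:ℝ) * b := by
      field_simp at hab; linarith
    ext ⟨m, n⟩
    simp only [Set.mem_setOf_eq, Set.mem_insert_iff, Set.mem_singleton_iff, Prod.mk.injEq, key]
    constructor
    · rintro ⟨hadm, (⟨hm, hn⟩ | ⟨hn, hmb⟩)⟩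
      · exact Or.inl ⟨hm, hn⟩
      · right
        refine ⟨?_, hn⟩
        have : (m:ℝ) = 2 * (ℓ:ℝ) := by
          rw [hab'] at hmb
          have := mul_right_cancel₀ hb.ne' hmb
          linarith
        exact_mod_cast this
    · rintro (⟨hm, hn⟩ | ⟨hm, hn⟩)
      · exact ⟨Or.inl (by simp [hm]), Or.inl ⟨hm, hn⟩⟩
      · refine ⟨Or.inl (by simp [hm]), Or.inr ⟨hn, ?_⟩⟩
        rw [hm, hab']; push_cast; ring
  · intro hne
    ext ⟨m, n⟩
    simp only [Set.mem_setOf_eq, Set.mem_singleton_iff, Prod.mk.injEq, key]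
    constructor
    · rintro ⟨hadm, (⟨hm, hn⟩ | ⟨hn, hmb⟩)⟩
      · exact ⟨hm, hn⟩
      · exfalso
        subst hn
        have hmeven : Even m := by
          rcases hadm with h | ⟨_, h⟩
          · exact h
          · omega
        obtain ⟨k, hk⟩ := hmeven
        have hm0 : m ≠ 0 := by
          rintro rfl
          simp at hmb
          exact ha.ne' hmb.symm
        refine hne ⟨k, by omega, ?_⟩
        have hkm : (m:ℝ) = 2 * k := by rw [hk]; push_cast; ring
        rw [hkm] at hmb
        have hk0 : (0:ℝ) < (k:ℝ) := by
          have : k ≠ 0 := by omega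
          exact_mod_cast Nat.pos_of_ne_zero this
        rw [← hmb, div_eq_div_iff hb.ne' (by positivity)]
        ring
    · rintro ⟨hm, hn⟩
      exact ⟨Or.inl (by simp [hm]), Or.inl ⟨hm, hn⟩⟩
end

section
/- For every point x₂ ∈ ℝ there is an isometry of the flat Klein bottle 𝕂_{a,b} (induced by a Euclidean isometry of ℝ² normalizing the deck group Γ) taking the class of (0, x₂) to the class of (0, y) for some y ∈ [0, b/4]. -/
/-- The glide reflection `(x₁,x₂) ↦ (x₁ + a/2, -x₂)` as a permutation of `ℝ²`. -/
noncomputable def glide (a : ℝ) : Equiv.Perm (ℝ × ℝ) where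
  toFun p := (p.1 + a / 2, -p.2)
  invFun p := (p.1 - a / 2, -p.2)
  left_inv p := by simp
  right_inv p := by simp

/-- The vertical translation `(x₁,x₂) ↦ (x₁, x₂ + b)` as a permutation of `ℝ²`. -/
noncomputable def vertTrans (b : ℝ) : Equiv.Perm (ℝ × ℝ) where
  toFun p := (p.1, p.2 + b)
  invFun p := (p.1, p.2 - b)
  left_inv p := by simp
  right_inv p := by simp


/-!
The normalizer of `Γ = deckGroup a b` contains the point reflection `p ↦ -p`, which inverts both generators, and
the vertical translation by `b/2`, which commutes with `vertTrans b` and conjugates `glide a` to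
`vertTrans b * glide a`. If `k b/2` is the multiple of `b/2` nearest to `x₂`, then
`r = x₂ - k b/2 ∈ [-b/4, b/4]`; translating by `-k b/2` sends `(0, x₂)` to `(0, r)`, and `p ↦ -p`
followed by translation by `k b/2` sends it to `(0, -r)`. So one of the two works with `γ = 1`.
-/

open Subgroup

def IsPlaneIsometry (σ : Equiv.Perm (ℝ × ℝ)) : Prop :=
  ∀ p q : ℝ × ℝ, ((σ p).1 - (σ q).1)^2 + ((σ p).2 - (σ q).2)^2 = (p.1 - q.1)^2 + (p.2 - q.2)^2

theorem IsPlaneIsometry.mul {σ τ : Equiv.Perm (ℝ × ℝ)} (hσ : IsPlaneIsometry σ)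
    (hτ : IsPlaneIsometry τ) : IsPlaneIsometry (σ * τ) := fun p q => by
  simp only [Equiv.Perm.mul_apply, hσ (τ p) (τ q), hτ p q]

theorem isPlaneIsometry_vertTrans (c : ℝ) : IsPlaneIsometry (vertTrans c) := fun p q => by
  simp only [vertTrans, Equiv.coe_fn_mk]
  ring

theorem isPlaneIsometry_neg : IsPlaneIsometry (Equiv.neg (ℝ × ℝ)) := fun p q => by
  simp only [Equiv.neg_apply, Prod.fst_neg, Prod.snd_neg]
  ring

theorem Subgroup.mem_normalizer_closure_of_conj_mem {G : Type*} [Group G] {s : Set G} {g : G}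
    (h₁ : ∀ x ∈ s, g * x * g⁻¹ ∈ closure s) (h₂ : ∀ x ∈ s, g⁻¹ * x * g ∈ closure s) :
    g ∈ normalizer (closure s : Set G) := by
  rw [mem_normalizer_iff_map_conj_eq, MonoidHom.map_closure]
  refine le_antisymm ((closure_le _).2 ?_) ((closure_le _).2 fun x hx => ?_)
  · rintro _ ⟨x, hx, rfl⟩
    exact h₁ x hx
  · rw [← MonoidHom.map_closure]
    exact ⟨g⁻¹ * x * g, h₂ x hx, by simp [MulAut.conj_apply, mul_assoc]⟩

theorem vertTrans_add (c d : ℝ) : vertTrans (c + d) = vertTrans c * vertTrans d := by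
  ext p <;> simp [vertTrans, add_assoc, add_comm d]

theorem vertTrans_inv (c : ℝ) : (vertTrans c)⁻¹ = vertTrans (-c) := by
  ext p <;> simp [vertTrans, Equiv.Perm.inv_def, sub_eq_add_neg]

theorem vertTrans_zpow (c : ℝ) (k : ℤ) : vertTrans c ^ k = vertTrans (k * c) := by
  let f : Multiplicative ℝ →* Equiv.Perm (ℝ × ℝ) :=
    MonoidHom.mk' (fun c => vertTrans c.toAdd) fun c d => vertTrans_add c.toAdd d.toAdd
  simpa [f, ← zsmul_eq_mul] using (map_zpow f (Multiplicative.ofAdd c) k).symm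

theorem vertTrans_conj_glide (a c : ℝ) :
    vertTrans c * glide a * (vertTrans c)⁻¹ = vertTrans (2 * c) * glide a := by
  ext p
  · simp [vertTrans, glide, Equiv.Perm.inv_def]
  · simp only [vertTrans, glide, Equiv.Perm.inv_def, Equiv.symm_mk, Equiv.Perm.coe_mul,
      Equiv.coe_fn_mk, Function.comp_apply, neg_sub]
    ring

theorem neg_conj_glide (a : ℝ) :
    Equiv.neg (ℝ × ℝ) * glide a * (Equiv.neg (ℝ × ℝ))⁻¹ = (glide a)⁻¹ := by
  ext p <;> simp [glide, Equiv.Perm.inv_def, neg_add_eq_sub]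

theorem neg_conj_vertTrans (b : ℝ) :
    Equiv.neg (ℝ × ℝ) * vertTrans b * (Equiv.neg (ℝ × ℝ))⁻¹ = (vertTrans b)⁻¹ := by
  ext p <;> simp [vertTrans, Equiv.Perm.inv_def, neg_add_eq_sub]

abbrev deckGroup (a b : ℝ) : Subgroup (Equiv.Perm (ℝ × ℝ)) :=
  closure {glide a, vertTrans b}

section deckGroup

variable (a b : ℝ)

theorem glide_mem_deckGroup : glide a ∈ deckGroup a b :=
  subset_closure (Set.mem_insert (glide a) {vertTrans b})

theorem vertTrans_mem_deckGroup (k : ℤ) : vertTrans (k * b) ∈ deckGroup a b := by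
  rw [← vertTrans_zpow]
  exact zpow_mem (subset_closure (Set.mem_insert_of_mem _ (Set.mem_singleton _))) k

theorem vertTrans_half_conj_mem (k : ℤ) :
    ∀ x ∈ ({glide a, vertTrans b} : Set _),
      vertTrans (k * (b / 2)) * x * (vertTrans (k * (b / 2)))⁻¹ ∈ deckGroup a b := by
  rintro x (rfl | rfl)
  · rw [vertTrans_conj_glide, show 2 * (k * (b / 2)) = k * b by ring]
    exact mul_mem (vertTrans_mem_deckGroup a b k) (glide_mem_deckGroup a b)
  · rw [vertTrans_inv, ← vertTrans_add, ← vertTrans_add, add_neg_cancel_comm]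
    simpa using vertTrans_mem_deckGroup a b 1

theorem vertTrans_half_mem_normalizer (k : ℤ) :
    vertTrans (k * (b / 2)) ∈ normalizer (deckGroup a b : Set _) := by
  refine mem_normalizer_closure_of_conj_mem (vertTrans_half_conj_mem a b k) fun x hx => ?_
  simpa [vertTrans_inv] using vertTrans_half_conj_mem a b (-k) x hx

theorem neg_mem_normalizer : Equiv.neg (ℝ × ℝ) ∈ normalizer (deckGroup a b : Set _) := by
  have hconj : ∀ x ∈ ({glide a, vertTrans b} : Set _),
      Equiv.neg (ℝ × ℝ) * x * (Equiv.neg (ℝ × ℝ))⁻¹ ∈ deckGroup a b := by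
    rintro x (rfl | rfl)
    · rw [neg_conj_glide]
      exact inv_mem (glide_mem_deckGroup a b)
    · rw [neg_conj_vertTrans]
      simpa using inv_mem (vertTrans_mem_deckGroup a b 1)
  have hinv : (Equiv.neg (ℝ × ℝ))⁻¹ = Equiv.neg (ℝ × ℝ) := Equiv.neg_symm
  exact mem_normalizer_closure_of_conj_mem hconj (by simpa only [hinv, inv_inv] using hconj)

end deckGroup

theorem stmt_10_general (a b : ℝ) (hb : 0 < b) (x₂ : ℝ) :
    ∃ y ∈ Set.Icc (0 : ℝ) (b / 4), ∃ σ : Equiv.Perm (ℝ × ℝ),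
      -- σ is a Euclidean isometry of ℝ²
      (∀ p q : ℝ × ℝ, ((σ p).1 - (σ q).1)^2 + ((σ p).2 - (σ q).2)^2 =
          (p.1 - q.1)^2 + (p.2 - q.2)^2) ∧
      -- σ normalizes the deck group Γ
      Subgroup.map (MulAut.conj σ).toMonoidHom (Subgroup.closure {glide a, vertTrans b}) =
        Subgroup.closure {glide a, vertTrans b} ∧
      -- σ takes the class of (0, x₂) to the class of (0, y)
      ∃ γ ∈ Subgroup.closure {glide a, vertTrans b}, γ (σ (0, x₂)) = ((0 : ℝ), y) := by
  set k := round (x₂ / (b / 2))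
  set r := x₂ - k * (b / 2)
  have hr : |r| ≤ b / 4 := by
    have hround : |x₂ / (b / 2) - k| ≤ 1 / 2 := abs_sub_round _
    have hr_eq : r = b / 2 * (x₂ / (b / 2) - k) := by
      field_simp
      ring
    calc |r| = b / 2 * |x₂ / (b / 2) - k| := by rw [hr_eq, abs_mul, abs_of_pos (half_pos hb)]
      _ ≤ b / 2 * (1 / 2) := by gcongr
      _ = b / 4 := by ring
  rcases le_total 0 r with hr0 | hr0
  · refine ⟨r, ⟨hr0, (le_abs_self r).trans hr⟩, vertTrans ((-k : ℤ) * (b / 2)),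
      isPlaneIsometry_vertTrans _, mem_normalizer_iff_map_conj_eq.1
        (vertTrans_half_mem_normalizer a b (-k)), 1, one_mem _, ?_⟩
    simp only [vertTrans, Equiv.coe_fn_mk, Equiv.Perm.coe_one, id_eq, Prod.mk.injEq, true_and, r]
    push_cast
    ring
  · refine ⟨-r, ⟨neg_nonneg.2 hr0, (neg_le_abs r).trans hr⟩,
      vertTrans (k * (b / 2)) * Equiv.neg (ℝ × ℝ),
      (isPlaneIsometry_vertTrans _).mul isPlaneIsometry_neg, mem_normalizer_iff_map_conj_eq.1
        (mul_mem (vertTrans_half_mem_normalizer a b k) (neg_mem_normalizer a b)), 1, one_mem _, ?_⟩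
    simp only [vertTrans, Equiv.Perm.coe_mul, Equiv.coe_fn_mk, Equiv.neg_apply, Function.comp_apply,
      Prod.neg_mk, neg_zero, Equiv.Perm.coe_one, id_eq, Prod.mk.injEq, true_and, r]
    ring

/-- For every `x₂ ∈ ℝ` there is an isometry of the flat Klein bottle `𝕂_{a,b}` —
induced by a Euclidean isometry `σ` of `ℝ²` normalizing the deck group
`Γ = ⟨glide, vertical translation⟩` — taking the class of `(0, x₂)` to the class of
`(0, y)` for some `y ∈ [0, b/4]`. -/
theorem stmt_10 (a b : ℝ) (ha : 0 < a) (hb : 0 < b) (x₂ : ℝ) :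
    ∃ y ∈ Set.Icc (0 : ℝ) (b / 4), ∃ σ : Equiv.Perm (ℝ × ℝ),
      -- σ is a Euclidean isometry of ℝ²
      (∀ p q : ℝ × ℝ, ((σ p).1 - (σ q).1)^2 + ((σ p).2 - (σ q).2)^2 =
          (p.1 - q.1)^2 + (p.2 - q.2)^2) ∧
      -- σ normalizes the deck group Γ
      Subgroup.map (MulAut.conj σ).toMonoidHom (Subgroup.closure {glide a, vertTrans b}) =
        Subgroup.closure {glide a, vertTrans b} ∧
      -- σ takes the class of (0, x₂) to the class of (0, y)
      ∃ γ ∈ Subgroup.closure {glide a, vertTrans b}, γ (σ (0, x₂)) = ((0 : ℝ), y) :=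
  stmt_10_general a b hb x₂
end
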